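/- Extension of the mixture Hellinger bound to a general parameter set via diffeomorphism (Corollary of Section 3.4 of the paper). Let Θ₀ ⊆ ℝ^m be measurable, θ ↦ P_θ a Markov kernel from Θ₀ to (𝒳,𝒜), ψ : Θ₀ → ℝ^k measurable, and ‖·‖ a norm on ℝ^k. Let φ : ℝ^d → Θ₀ be a diffeomorphism onto Θ₀ (a bijection, continuously differentiable with continuously differentiable inverse), set ψ̃ := ψ ∘ φ, and for a probability measure Q on ℝ^d and h ∈ ℝ^d let ℙ̃₀ be the law on 𝒳 × ℝ^d of (X,t) with t ~ Q and X | t ~ P_{φ(t)}, and ℙ̃_h the image of ℙ̃₀ under (x,t) ↦ (x, t−h). Assume B := ∫_{ℝ^d} ‖ψ̃(t) − ψ̃(t−h)‖² dQ(t) < ∞ and H²(ℙ̃₀, ℙ̃_h) > 0. Then for every measurable T : 𝒳 → ℝ^k: sup_{θ∈Θ₀} E_θ‖T(X) − ψ(θ)‖² ≥ [ ‖∫_{ℝ^d} (ψ̃(t) − ψ̃(t−h)) dQ(t)‖ / (2 H(ℙ̃₀, ℙ̃_h)) − B^{1/2} ]₊². -/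

import Mathlib

open MeasureTheory ProbabilityTheory ENNReal

/-- The squared Hellinger distance `H²(P, P')`, computed with the common dominating
measure `P + P'`; it does not depend on the choice of dominating measure. -/
noncomputable def hellingerSq {α : Type*} [MeasurableSpace α] (P P' : Measure α) : ℝ :=
  ∫ x, (Real.sqrt ((P.rnDeriv (P + P')) x).toReal
        - Real.sqrt ((P'.rnDeriv (P + P')) x).toReal) ^ 2 ∂(P + P')

/-- The mixture measure `ℙ̃₀` on `𝒳 × ℝ^d`: the law of `(X, t)` with `t ~ Q`,
`X | t ~ P_{φ(t)}`. -/
noncomputable def mixZeroComap {𝒳 : Type*} [MeasurableSpace 𝒳] {d m : ℕ}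
    (κ : Kernel (Fin m → ℝ) 𝒳) (φ : (Fin d → ℝ) → (Fin m → ℝ)) (hφ : Measurable φ)
    (Q : Measure (Fin d → ℝ)) : Measure (𝒳 × (Fin d → ℝ)) :=
  (Q.compProd (κ.comap φ hφ)).map Prod.swap

/-- The shifted mixture measure `ℙ̃_h`, the image of `ℙ̃₀` under `(x, t) ↦ (x, t − h)`. -/
noncomputable def mixShiftComap {𝒳 : Type*} [MeasurableSpace 𝒳] {d m : ℕ}
    (κ : Kernel (Fin m → ℝ) 𝒳) (φ : (Fin d → ℝ) → (Fin m → ℝ)) (hφ : Measurable φ)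
    (Q : Measure (Fin d → ℝ)) (h : Fin d → ℝ) : Measure (𝒳 × (Fin d → ℝ)) :=
  (mixZeroComap κ φ hφ Q).map fun z => (z.1, z.2 - h)

section Aux
variable {k : ℕ} {Z : Type*} [MeasurableSpace Z]

section Nfacts
variable {k : ℕ} (N : (Fin k → ℝ) → ℝ)
  (hN_add : ∀ x y, N (x + y) ≤ N x + N y)
  (hN_smul : ∀ (c : ℝ) (x), N (c • x) = |c| * N x)
include hN_add hN_smul

/-- Bundle `N` as a seminorm. -/
noncomputable def NSeminorm : Seminorm ℝ (Fin k → ℝ) :=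
  Seminorm.of N hN_add (fun r x => by simpa using hN_smul r x)

lemma NSeminorm_apply (x) : NSeminorm N hN_add hN_smul x = N x := rfl

lemma N_nonneg (x) : 0 ≤ N x := by
  simpa [NSeminorm_apply] using apply_nonneg (NSeminorm N hN_add hN_smul) x

lemma N_le_const_mul_norm : ∃ C : ℝ, 0 ≤ C ∧ ∀ x, N x ≤ C * ‖x‖ := by
  refine ⟨∑ i : Fin k, N (Pi.single i 1), Finset.sum_nonneg fun i _ => N_nonneg N hN_add hN_smul _,
    fun x => ?_⟩
  have hx : x = ∑ i : Fin k, (x i) • (Pi.single i 1 : Fin k → ℝ) := by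
    funext j
    simp [Pi.single_apply, Finset.sum_apply, mul_comm]
  calc N x = N (∑ i : Fin k, (x i) • (Pi.single i 1 : Fin k → ℝ)) := by rw [← hx]
    _ ≤ ∑ i : Fin k, N ((x i) • (Pi.single i 1 : Fin k → ℝ)) := by
        have h0 : N 0 = 0 := by simpa using hN_smul 0 0
        exact Finset.le_sum_of_subadditive N h0.le hN_add Finset.univ
          (fun i => (x i) • (Pi.single i 1 : Fin k → ℝ))
    _ ≤ ∑ i : Fin k, N (Pi.single i 1) * ‖x‖ := by
        refine Finset.sum_le_sum fun i _ => ?_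
        rw [hN_smul]
        rw [mul_comm]
        exact mul_le_mul_of_nonneg_left (by simpa using norm_le_pi_norm x i)
          (N_nonneg N hN_add hN_smul _)
    _ = (∑ i : Fin k, N (Pi.single i 1)) * ‖x‖ := by rw [Finset.sum_mul]

lemma N_continuous : Continuous N := by
  obtain ⟨C, hC0, hC⟩ := N_le_const_mul_norm N hN_add hN_smul
  have hlip : LipschitzWith (Real.toNNReal C) N := by
    apply LipschitzWith.of_dist_le_mul
    intro x y
    have h1 : N x - N y ≤ N (x - y) := by
      have := hN_add (x - y) y; simpa using this
    have h2 : N y - N x ≤ N (x - y) := by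
      have := hN_add (y - x) x
      have hsymm : N (y - x) = N (x - y) := by
        have := hN_smul (-1) (x - y); simpa [neg_sub] using this
      simp only [sub_add_cancel] at this
      linarith [this, hsymm.symm.le]
    rw [Real.dist_eq]
    have habs : |N x - N y| ≤ N (x - y) := abs_le.2 ⟨by linarith, h1⟩
    have hdist : dist x y = ‖x - y‖ := dist_eq_norm x y
    rw [hdist]
    calc |N x - N y| ≤ N (x - y) := habs
      _ ≤ C * ‖x - y‖ := hC _
      _ ≤ Real.toNNReal C * ‖x - y‖ := by
          gcongr
          exact Real.le_coe_toNNReal C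
  exact hlip.continuous

lemma norm_le_const_mul_N (hN_eq_zero : ∀ x, N x = 0 ↔ x = 0) :
    ∃ c : ℝ, 0 < c ∧ ∀ x, c * ‖x‖ ≤ N x := by
  rcases isEmpty_or_nonempty (Fin k) with hk | hk
  · refine ⟨1, one_pos, fun x => ?_⟩
    have : x = 0 := Subsingleton.elim x 0
    simp [this, (hN_eq_zero 0).2 rfl]
  · -- sphere is compact and nonempty
    have hsph : (Metric.sphere (0 : Fin k → ℝ) 1).Nonempty := by
      refine ⟨fun _ => (1:ℝ), ?_⟩
      simp [Metric.mem_sphere, dist_zero_right]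
    obtain ⟨z, hz, hzmin⟩ := (isCompact_sphere (0 : Fin k → ℝ) 1).exists_isMinOn hsph
      ((N_continuous N hN_add hN_smul).continuousOn)
    have hz1 : ‖z‖ = 1 := by simpa [Metric.mem_sphere, dist_zero_right] using hz
    have hzpos : 0 < N z := by
      rcases lt_or_eq_of_le (N_nonneg N hN_add hN_smul z) with h | h
      · exact h
      · exfalso
        have : z = 0 := (hN_eq_zero z).1 h.symm
        rw [this] at hz1; simp at hz1
    refine ⟨N z, hzpos, fun x => ?_⟩
    rcases eq_or_ne x 0 with rfl | hx
    · simp [(hN_eq_zero 0).2 rfl]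
    · have hxn : ‖x‖ ≠ 0 := norm_ne_zero_iff.2 hx
      have hmem : ‖x‖⁻¹ • x ∈ Metric.sphere (0 : Fin k → ℝ) 1 := by
        simp [norm_smul, abs_of_nonneg (inv_nonneg.2 (norm_nonneg x)), inv_mul_cancel₀ hxn]
      have := hzmin hmem
      have h2 : N z ≤ ‖x‖⁻¹ * N x := by
        simpa [hN_smul, abs_of_nonneg (inv_nonneg.2 (norm_nonneg x))] using this
      have hxpos : 0 < ‖x‖ := (norm_nonneg x).lt_of_ne (Ne.symm hxn)
      calc N z * ‖x‖ ≤ (‖x‖⁻¹ * N x) * ‖x‖ := by gcongr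
        _ = N x := by field_simp
end Nfacts

lemma integrable_of_sq_lintegral_ne_top {N : (Fin k → ℝ) → ℝ} {c : ℝ} (hc : 0 < c)
    (hN0 : ∀ x, 0 ≤ N x) (hcN : ∀ x, c * ‖x‖ ≤ N x) (hNc : Continuous N)
    (P : Measure Z) [IsFiniteMeasure P]
    {f : Z → (Fin k → ℝ)} (hf : Measurable f)
    (hm : ∫⁻ z, ENNReal.ofReal ((N (f z))^2) ∂P ≠ ⊤) : Integrable f P := by
  refine ⟨hf.aestronglyMeasurable, ?_⟩
  have hNfm : Measurable fun z => ENNReal.ofReal ((N (f z))^2) :=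
    ENNReal.measurable_ofReal.comp (((hNc.measurable.comp hf).pow_const 2))
  have hbd : ∀ z, (‖f z‖₊ : ℝ≥0∞) ≤
      ENNReal.ofReal c⁻¹ * (1 + ENNReal.ofReal ((N (f z))^2)) := by
    intro z
    have h1 : ‖f z‖ ≤ c⁻¹ * (1 + (N (f z))^2) := by
      have h2 := hcN (f z)
      have h3 : N (f z) ≤ 1 + (N (f z))^2 := by nlinarith [hN0 (f z)]
      rw [← le_div_iff₀' hc] at h2
      calc ‖f z‖ ≤ N (f z) / c := h2
        _ = c⁻¹ * N (f z) := by ring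
        _ ≤ c⁻¹ * (1 + (N (f z))^2) := by
            exact mul_le_mul_of_nonneg_left h3 (inv_nonneg.2 hc.le)
    calc (‖f z‖₊ : ℝ≥0∞) = ENNReal.ofReal ‖f z‖ := (ofReal_norm (f z)).symm
      _ ≤ ENNReal.ofReal (c⁻¹ * (1 + (N (f z))^2)) := ENNReal.ofReal_le_ofReal h1
      _ = ENNReal.ofReal c⁻¹ * ENNReal.ofReal (1 + (N (f z))^2) := by
          rw [ENNReal.ofReal_mul (inv_nonneg.2 hc.le)]
      _ = ENNReal.ofReal c⁻¹ * (1 + ENNReal.ofReal ((N (f z))^2)) := by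
          rw [ENNReal.ofReal_add zero_le_one (sq_nonneg _)]; simp
  rw [hasFiniteIntegral_def]
  calc ∫⁻ z, (‖f z‖₊ : ℝ≥0∞) ∂P
      ≤ ∫⁻ z, ENNReal.ofReal c⁻¹ * (1 + ENNReal.ofReal ((N (f z))^2)) ∂P :=
        lintegral_mono hbd
    _ = ENNReal.ofReal c⁻¹ * ∫⁻ z, (1 + ENNReal.ofReal ((N (f z))^2)) ∂P :=
        lintegral_const_mul' _ _ ENNReal.ofReal_ne_top
    _ = ENNReal.ofReal c⁻¹ * (P Set.univ + ∫⁻ z, ENNReal.ofReal ((N (f z))^2) ∂P) := by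
        rw [lintegral_add_left measurable_const, lintegral_const, one_mul]
    _ < ⊤ := by
        refine ENNReal.mul_lt_top ENNReal.ofReal_lt_top ?_
        exact ENNReal.add_lt_top.2 ⟨measure_lt_top _ _, lt_top_iff_ne_top.2 hm⟩

lemma N_integral_le_integral_N (N : (Fin k → ℝ) → ℝ)
    (hN_add : ∀ x y, N (x + y) ≤ N x + N y)
    (hN_smul : ∀ (c : ℝ) (x), N (c • x) = |c| * N x)
    (hN0 : ∀ x, 0 ≤ N x) (hNc : Continuous N)
    {C : ℝ} (hCN : ∀ x, N x ≤ C * ‖x‖)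
    (μ : Measure Z) [IsFiniteMeasure μ] [NeZero μ]
    (g : Z → (Fin k → ℝ)) (hg : Integrable g μ) :
    N (∫ z, g z ∂μ) ≤ ∫ z, N (g z) ∂μ := by
  have hconv : ConvexOn ℝ Set.univ N := by
    refine ⟨convex_univ, fun x _ y _ a b ha hb hab => ?_⟩
    calc N (a • x + b • y) ≤ N (a • x) + N (b • y) := hN_add _ _
      _ = a * N x + b * N y := by rw [hN_smul, hN_smul, abs_of_nonneg ha, abs_of_nonneg hb]
      _ = a • N x + b • N y := rfl
  have hgi : Integrable (N ∘ g) μ := by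
    refine Integrable.mono' (hg.norm.const_mul C) (hNc.comp_aestronglyMeasurable hg.1) ?_
    filter_upwards with z
    show |(N ∘ g) z| ≤ C * ‖g z‖
    rw [Function.comp_apply, abs_of_nonneg (hN0 _)]
    exact hCN (g z)
  have hJ := hconv.map_average_le hNc.continuousOn isClosed_univ
    (Filter.Eventually.of_forall fun _ => Set.mem_univ _) hg hgi
  rw [average_eq, average_eq] at hJ
  set M : ℝ := μ.real Set.univ with hM
  have hMpos : 0 < M := by
    rw [hM]
    exact ENNReal.toReal_pos (NeZero.ne' (μ Set.univ)).symm (measure_ne_top _ _)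
  have hL : N (M⁻¹ • ∫ z, g z ∂μ) = M⁻¹ * N (∫ z, g z ∂μ) := by
    rw [hN_smul, abs_of_nonneg (inv_nonneg.2 hMpos.le)]
  rw [hL] at hJ
  have hR : M⁻¹ • ∫ z, N (g z) ∂μ = M⁻¹ * ∫ z, N (g z) ∂μ := rfl
  simp only [Function.comp_apply, smul_eq_mul] at hJ
  calc N (∫ z, g z ∂μ) = M * (M⁻¹ * N (∫ z, g z ∂μ)) := by field_simp
    _ ≤ M * (M⁻¹ * ∫ z, N (g z) ∂μ) := by
        exact mul_le_mul_of_nonneg_left hJ hMpos.le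
    _ = ∫ z, N (g z) ∂μ := by field_simp

lemma key_hellinger_bound (N : (Fin k → ℝ) → ℝ)
    (hN_add : ∀ x y, N (x + y) ≤ N x + N y)
    (hN_smul : ∀ (c : ℝ) (x), N (c • x) = |c| * N x)
    (hN0 : ∀ x, 0 ≤ N x) (hNc : Continuous N)
    {C : ℝ} (hCN : ∀ x, N x ≤ C * ‖x‖)
    (hJensen : ∀ (μ : Measure Z), IsFiniteMeasure μ → NeZero μ →
      ∀ (g : Z → (Fin k → ℝ)), Integrable g μ → N (∫ z, g z ∂μ) ≤ ∫ z, N (g z) ∂μ)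
    (P₀ P₁ : Measure Z) [IsProbabilityMeasure P₀] [IsProbabilityMeasure P₁]
    (f : Z → (Fin k → ℝ)) (hf : Measurable f)
    (hint0 : Integrable f P₀) (hint1 : Integrable f P₁)
    (hm0 : ∫⁻ z, ENNReal.ofReal ((N (f z))^2) ∂P₀ ≠ ⊤)
    (hm1 : ∫⁻ z, ENNReal.ofReal ((N (f z))^2) ∂P₁ ≠ ⊤) :
    N ((∫ z, f z ∂P₁) - ∫ z, f z ∂P₀) ≤ Real.sqrt (hellingerSq P₀ P₁) *
      Real.sqrt (2 * ((∫⁻ z, ENNReal.ofReal ((N (f z))^2) ∂P₀).toReal +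
                      (∫⁻ z, ENNReal.ofReal ((N (f z))^2) ∂P₁).toReal)) := by
  classical
  set ν : Measure Z := P₀ + P₁ with hν
  haveI hfinν : IsFiniteMeasure ν := by rw [hν]; infer_instance
  haveI hne : NeZero ν := by
    refine ⟨fun hcon => ?_⟩
    have h2 : ν Set.univ = 0 := by rw [hcon]; simp
    rw [hν, Measure.add_apply, measure_univ, measure_univ] at h2
    norm_num at h2
  have hac0 : P₀ ≪ ν := Measure.absolutelyContinuous_of_le (Measure.le_add_right le_rfl)
  have hac1 : P₁ ≪ ν := Measure.absolutelyContinuous_of_le (Measure.le_add_left le_rfl)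
  set q0 : Z → ℝ≥0∞ := P₀.rnDeriv ν with hq0def
  set q1 : Z → ℝ≥0∞ := P₁.rnDeriv ν with hq1def
  set p0 : Z → ℝ := fun z => (q0 z).toReal with hp0def
  set p1 : Z → ℝ := fun z => (q1 z).toReal with hp1def
  have hq0m : Measurable q0 := Measure.measurable_rnDeriv _ _
  have hq1m : Measurable q1 := Measure.measurable_rnDeriv _ _
  have hp0m : Measurable p0 := hq0m.ennreal_toReal
  have hp1m : Measurable p1 := hq1m.ennreal_toReal
  have hq0lt : ∀ᵐ z ∂ν, q0 z < ⊤ := Measure.rnDeriv_lt_top _ _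
  have hq1lt : ∀ᵐ z ∂ν, q1 z < ⊤ := Measure.rnDeriv_lt_top _ _
  have hNfm : Measurable fun z => N (f z) := hNc.measurable.comp hf
  -- the signed density difference function
  set g : Z → (Fin k → ℝ) := fun z => (p1 z - p0 z) • f z with hgdef
  have hint0' : Integrable (fun z => p0 z • f z) ν :=
    (integrable_rnDeriv_smul_iff hac0).mpr hint0
  have hint1' : Integrable (fun z => p1 z • f z) ν :=
    (integrable_rnDeriv_smul_iff hac1).mpr hint1
  have hgint : Integrable g ν := by
    have : g = fun z => p1 z • f z - p0 z • f z := by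
      funext z; rw [hgdef]; simp [sub_smul]
    rw [this]
    exact hint1'.sub hint0'
  -- step 1 : the difference of the integrals
  have hΔ : (∫ z, f z ∂P₁) - ∫ z, f z ∂P₀ = ∫ z, g z ∂ν := by
    have h1 : ∫ z, f z ∂P₁ = ∫ z, p1 z • f z ∂ν := (integral_rnDeriv_smul hac1).symm
    have h0 : ∫ z, f z ∂P₀ = ∫ z, p0 z • f z ∂ν := (integral_rnDeriv_smul hac0).symm
    rw [h1, h0, ← integral_sub hint1' hint0']
    congr 1
    funext z
    rw [hgdef]; simp [sub_smul]
  -- step 2 : Jensen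
  have hJ : N ((∫ z, f z ∂P₁) - ∫ z, f z ∂P₀) ≤ ∫ z, N (g z) ∂ν := by
    rw [hΔ]; exact hJensen ν hfinν hne g hgint
  -- step 3 : to lintegral
  have hNg_nonneg : 0 ≤ᵐ[ν] fun z => N (g z) := Filter.Eventually.of_forall fun z => hN0 _
  have hNg_meas : AEStronglyMeasurable (fun z => N (g z)) ν :=
    (hNc.comp_aestronglyMeasurable hgint.1)
  have hlint : ∫ z, N (g z) ∂ν = (∫⁻ z, ENNReal.ofReal (N (g z)) ∂ν).toReal :=
    integral_eq_lintegral_of_nonneg_ae hNg_nonneg hNg_meas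
  -- step 4 : Cauchy-Schwarz setup
  set u : Z → ℝ≥0∞ := fun z => ENNReal.ofReal |Real.sqrt (p1 z) - Real.sqrt (p0 z)| with hudef
  set v : Z → ℝ≥0∞ :=
    fun z => ENNReal.ofReal ((Real.sqrt (p0 z) + Real.sqrt (p1 z)) * N (f z)) with hvdef
  have hum : Measurable u := by
    apply ENNReal.measurable_ofReal.comp
    exact ((hp1m.sqrt.sub hp0m.sqrt)).abs
  have hvm : Measurable v := by
    apply ENNReal.measurable_ofReal.comp
    exact (hp0m.sqrt.add hp1m.sqrt).mul hNfm
  have huv : ∀ᵐ z ∂ν, ENNReal.ofReal (N (g z)) = (u * v) z := by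
    filter_upwards with z
    have hNg : N (g z) = |p1 z - p0 z| * N (f z) := by rw [hgdef]; exact hN_smul _ _
    have habs : |p1 z - p0 z| =
        |Real.sqrt (p1 z) - Real.sqrt (p0 z)| * (Real.sqrt (p1 z) + Real.sqrt (p0 z)) := by
      have ha : 0 ≤ p1 z := ENNReal.toReal_nonneg
      have hb : 0 ≤ p0 z := ENNReal.toReal_nonneg
      rw [← abs_of_nonneg (by positivity : (0:ℝ) ≤ Real.sqrt (p1 z) + Real.sqrt (p0 z)),
        ← abs_mul]
      congr 1
      have := Real.sq_sqrt ha; have := Real.sq_sqrt hb; nlinarith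
    rw [hNg, habs]
    rw [Pi.mul_apply, hudef, hvdef]
    rw [← ENNReal.ofReal_mul (abs_nonneg _)]
    congr 1
    ring
  have hCS : ∫⁻ z, ENNReal.ofReal (N (g z)) ∂ν ≤
      (∫⁻ z, (u z) ^ (2:ℝ) ∂ν) ^ (1/2 : ℝ) * (∫⁻ z, (v z) ^ (2:ℝ) ∂ν) ^ (1/2 : ℝ) := by
    rw [lintegral_congr_ae huv]
    exact ENNReal.lintegral_mul_le_Lp_mul_Lq ν (Real.holderConjugate_iff_eq_conjExponent
      (by norm_num) |>.mpr (by norm_num)) hum.aemeasurable hvm.aemeasurable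
  set m0 : ℝ≥0∞ := ∫⁻ z, ENNReal.ofReal ((N (f z))^2) ∂P₀ with hm0def
  set m1 : ℝ≥0∞ := ∫⁻ z, ENNReal.ofReal ((N (f z))^2) ∂P₁ with hm1def
  have hofReal_sq : ∀ a : ℝ, 0 ≤ a → ENNReal.ofReal a ^ (2:ℝ) = ENNReal.ofReal (a^2) := by
    intro a ha
    rw [ENNReal.ofReal_rpow_of_nonneg ha (by norm_num)]
    norm_num
  -- first factor
  have hA_eq : ∫⁻ z, (u z) ^ (2:ℝ) ∂ν =
      ∫⁻ z, ENNReal.ofReal ((Real.sqrt (p1 z) - Real.sqrt (p0 z))^2) ∂ν := by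
    refine lintegral_congr fun z => ?_
    rw [hudef, hofReal_sq _ (abs_nonneg _), sq_abs]
  have hA_le : ∫⁻ z, (u z) ^ (2:ℝ) ∂ν ≤ 2 := by
    rw [hA_eq]
    calc ∫⁻ z, ENNReal.ofReal ((Real.sqrt (p1 z) - Real.sqrt (p0 z))^2) ∂ν
        ≤ ∫⁻ z, (q1 z + q0 z) ∂ν := by
          refine lintegral_mono fun z => ?_
          have ha : 0 ≤ p1 z := ENNReal.toReal_nonneg
          have hb : 0 ≤ p0 z := ENNReal.toReal_nonneg
          have hsq : (Real.sqrt (p1 z) - Real.sqrt (p0 z))^2 ≤ p1 z + p0 z := by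
            nlinarith [Real.sq_sqrt ha, Real.sq_sqrt hb, Real.sqrt_nonneg (p1 z),
              Real.sqrt_nonneg (p0 z)]
          calc ENNReal.ofReal ((Real.sqrt (p1 z) - Real.sqrt (p0 z))^2)
              ≤ ENNReal.ofReal (p1 z + p0 z) := ENNReal.ofReal_le_ofReal hsq
            _ ≤ ENNReal.ofReal (p1 z) + ENNReal.ofReal (p0 z) := ENNReal.ofReal_add_le
            _ ≤ q1 z + q0 z := add_le_add (ENNReal.ofReal_toReal_le) (ENNReal.ofReal_toReal_le)
      _ = (∫⁻ z, q1 z ∂ν) + ∫⁻ z, q0 z ∂ν := lintegral_add_left hq1m _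
      _ ≤ P₁ Set.univ + P₀ Set.univ :=
          add_le_add (Measure.lintegral_rnDeriv_le) (Measure.lintegral_rnDeriv_le)
      _ = 2 := by rw [measure_univ, measure_univ]; norm_num
  have hA_ne_top : ∫⁻ z, (u z) ^ (2:ℝ) ∂ν ≠ ⊤ := (hA_le.trans_lt (by norm_num)).ne
  have hH_eq : hellingerSq P₀ P₁ = (∫⁻ z, (u z) ^ (2:ℝ) ∂ν).toReal := by
    rw [hA_eq]
    rw [hellingerSq]
    rw [integral_eq_lintegral_of_nonneg_ae (f := fun x => (Real.sqrt (p0 x) - Real.sqrt (p1 x))^2)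
      (Filter.Eventually.of_forall fun z => sq_nonneg _)
      (((Measurable.sub hp0m.sqrt hp1m.sqrt).pow_const 2).aestronglyMeasurable)]
    congr 1
    refine lintegral_congr fun z => ?_
    congr 1
    ring
  have hH_nonneg : 0 ≤ hellingerSq P₀ P₁ := by rw [hH_eq]; exact ENNReal.toReal_nonneg
  have hA_ofReal : ∫⁻ z, (u z) ^ (2:ℝ) ∂ν = ENNReal.ofReal (hellingerSq P₀ P₁) := by
    rw [hH_eq, ENNReal.ofReal_toReal hA_ne_top]
  -- second factor
  have hV_le : ∫⁻ z, (v z) ^ (2:ℝ) ∂ν ≤ 2 * (m0 + m1) := by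
    have hptwise : ∀ᵐ z ∂ν, (v z) ^ (2:ℝ) ≤
        2 * (q0 z * ENNReal.ofReal ((N (f z))^2) + q1 z * ENNReal.ofReal ((N (f z))^2)) := by
      filter_upwards [hq0lt, hq1lt] with z h0lt h1lt
      have ha : 0 ≤ p0 z := ENNReal.toReal_nonneg
      have hb : 0 ≤ p1 z := ENNReal.toReal_nonneg
      have hvz : (v z) ^ (2:ℝ) =
          ENNReal.ofReal (((Real.sqrt (p0 z) + Real.sqrt (p1 z)) * N (f z))^2) := by
        rw [hvdef, hofReal_sq _ (mul_nonneg (by positivity) (hN0 _))]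
      rw [hvz]
      have hsq : ((Real.sqrt (p0 z) + Real.sqrt (p1 z)) * N (f z))^2 ≤
          2 * ((p0 z) * (N (f z))^2 + (p1 z) * (N (f z))^2) := by
        have h1 : (Real.sqrt (p0 z) + Real.sqrt (p1 z))^2 ≤ 2 * (p0 z + p1 z) := by
          nlinarith [Real.sq_sqrt ha, Real.sq_sqrt hb, Real.sqrt_nonneg (p0 z),
            Real.sqrt_nonneg (p1 z), sq_nonneg (Real.sqrt (p0 z) - Real.sqrt (p1 z))]
        calc ((Real.sqrt (p0 z) + Real.sqrt (p1 z)) * N (f z))^2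
            = (Real.sqrt (p0 z) + Real.sqrt (p1 z))^2 * (N (f z))^2 := by ring
          _ ≤ (2 * (p0 z + p1 z)) * (N (f z))^2 :=
              mul_le_mul_of_nonneg_right h1 (sq_nonneg _)
          _ = 2 * ((p0 z) * (N (f z))^2 + (p1 z) * (N (f z))^2) := by ring
      calc ENNReal.ofReal (((Real.sqrt (p0 z) + Real.sqrt (p1 z)) * N (f z))^2)
          ≤ ENNReal.ofReal (2 * ((p0 z) * (N (f z))^2 + (p1 z) * (N (f z))^2)) :=
            ENNReal.ofReal_le_ofReal hsq
        _ = 2 * (ENNReal.ofReal ((p0 z) * (N (f z))^2) +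
              ENNReal.ofReal ((p1 z) * (N (f z))^2)) := by
            rw [ENNReal.ofReal_mul (by norm_num),
              ENNReal.ofReal_add (by positivity) (by positivity)]
            norm_num
        _ = 2 * (q0 z * ENNReal.ofReal ((N (f z))^2) + q1 z * ENNReal.ofReal ((N (f z))^2)) := by
            rw [ENNReal.ofReal_mul ha, ENNReal.ofReal_mul hb,
              ENNReal.ofReal_toReal h0lt.ne, ENNReal.ofReal_toReal h1lt.ne]
    have hNf2m : Measurable fun z => ENNReal.ofReal ((N (f z))^2) :=
      ENNReal.measurable_ofReal.comp (hNfm.pow_const 2)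
    calc ∫⁻ z, (v z) ^ (2:ℝ) ∂ν
        ≤ ∫⁻ z, 2 * (q0 z * ENNReal.ofReal ((N (f z))^2) +
            q1 z * ENNReal.ofReal ((N (f z))^2)) ∂ν := lintegral_mono_ae hptwise
      _ = 2 * ((∫⁻ z, q0 z * ENNReal.ofReal ((N (f z))^2) ∂ν) +
            ∫⁻ z, q1 z * ENNReal.ofReal ((N (f z))^2) ∂ν) := by
          rw [lintegral_const_mul' _ _ (by norm_num),
            lintegral_add_left (f := fun z => q0 z * ENNReal.ofReal ((N (f z))^2)) ((hq0m.mul hNf2m)) _]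
      _ = 2 * (m0 + m1) := by
          rw [lintegral_rnDeriv_mul hac0 hNf2m.aemeasurable,
            lintegral_rnDeriv_mul hac1 hNf2m.aemeasurable]
  -- combine
  have hfinal : (∫⁻ z, ENNReal.ofReal (N (g z)) ∂ν).toReal ≤
      Real.sqrt (hellingerSq P₀ P₁) * Real.sqrt (2 * (m0.toReal + m1.toReal)) := by
    have hle2 : ∫⁻ z, ENNReal.ofReal (N (g z)) ∂ν ≤
        ENNReal.ofReal (hellingerSq P₀ P₁) ^ (1/2 : ℝ) * (2 * (m0 + m1)) ^ (1/2 : ℝ) := by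
      refine hCS.trans ?_
      rw [hA_ofReal]
      exact mul_le_mul_right (ENNReal.rpow_le_rpow hV_le (by norm_num)) _
    have hrhs_ne_top : ENNReal.ofReal (hellingerSq P₀ P₁) ^ (1/2 : ℝ) *
        (2 * (m0 + m1)) ^ (1/2 : ℝ) ≠ ⊤ := by
      apply ENNReal.mul_ne_top
      · exact ENNReal.rpow_ne_top_of_nonneg (by norm_num) ENNReal.ofReal_ne_top
      · refine ENNReal.rpow_ne_top_of_nonneg (by norm_num) ?_
        exact ENNReal.mul_ne_top (by norm_num) (ENNReal.add_ne_top.2 ⟨hm0, hm1⟩)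
    calc (∫⁻ z, ENNReal.ofReal (N (g z)) ∂ν).toReal
        ≤ (ENNReal.ofReal (hellingerSq P₀ P₁) ^ (1/2 : ℝ) *
            (2 * (m0 + m1)) ^ (1/2 : ℝ)).toReal := ENNReal.toReal_mono hrhs_ne_top hle2
      _ = Real.sqrt (hellingerSq P₀ P₁) * Real.sqrt (2 * (m0.toReal + m1.toReal)) := by
          rw [ENNReal.toReal_mul, ← ENNReal.toReal_rpow, ← ENNReal.toReal_rpow,
            ENNReal.toReal_ofReal hH_nonneg, ENNReal.toReal_mul, ENNReal.toReal_add hm0 hm1,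
            ENNReal.toReal_ofNat, ← Real.sqrt_eq_rpow, ← Real.sqrt_eq_rpow]
  calc N ((∫ z, f z ∂P₁) - ∫ z, f z ∂P₀) ≤ ∫ z, N (g z) ∂ν := hJ
    _ = (∫⁻ z, ENNReal.ofReal (N (g z)) ∂ν).toReal := hlint
    _ ≤ _ := hfinal

end Aux

/-- **Extension of the mixture Hellinger bound to a general parameter set via a
diffeomorphism (Corollary of Section 3.4).** -/
theorem mixture_HCR_hellinger_diffeomorphism
    {𝒳 : Type*} [MeasurableSpace 𝒳] (d m k : ℕ)
    (Θ₀ : Set (Fin m → ℝ)) (hΘ₀ : MeasurableSet Θ₀)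
    (κ : Kernel (Fin m → ℝ) 𝒳) [IsMarkovKernel κ]
    (ψ : (Fin m → ℝ) → (Fin k → ℝ)) (hψ : Measurable ψ)
    -- an arbitrary norm `N` on `ℝ^k`
    (N : (Fin k → ℝ) → ℝ)
    (hN_add : ∀ x y, N (x + y) ≤ N x + N y)
    (hN_smul : ∀ (c : ℝ) (x), N (c • x) = |c| * N x)
    (hN_eq_zero : ∀ x, N x = 0 ↔ x = 0)
    -- `φ` is a diffeomorphism from `ℝ^d` onto `Θ₀`
    (φ : (Fin d → ℝ) → (Fin m → ℝ)) (φinv : (Fin m → ℝ) → (Fin d → ℝ))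
    (hφC1 : ContDiff ℝ 1 φ)
    (hφrange : Set.range φ = Θ₀)
    (hφinj : Function.Injective φ)
    (hleft : ∀ t, φinv (φ t) = t)
    (hright : ∀ θ ∈ Θ₀, φ (φinv θ) = θ)
    (hφinvC1 : ContDiffOn ℝ 1 φinv Θ₀)
    (Q : Measure (Fin d → ℝ)) [IsProbabilityMeasure Q]
    (h : Fin d → ℝ)
    (T : 𝒳 → (Fin k → ℝ)) (hT : Measurable T)
    (hB : (∫⁻ t, ENNReal.ofReal ((N (ψ (φ t) - ψ (φ (t - h)))) ^ 2) ∂Q) ≠ ⊤)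
    (hH : 0 < hellingerSq
        (mixZeroComap κ φ (hφC1.continuous.measurable) Q)
        (mixShiftComap κ φ (hφC1.continuous.measurable) Q h)) :
    (⨆ θ ∈ Θ₀, ∫⁻ x, ENNReal.ofReal ((N (T x - ψ θ)) ^ 2) ∂(κ θ))
      ≥ (ENNReal.ofReal
            (N (∫ t, (ψ (φ t) - ψ (φ (t - h))) ∂Q)
              / (2 * Real.sqrt (hellingerSq
                    (mixZeroComap κ φ (hφC1.continuous.measurable) Q)
                    (mixShiftComap κ φ (hφC1.continuous.measurable) Q h))))
          - (∫⁻ t, ENNReal.ofReal ((N (ψ (φ t) - ψ (φ (t - h)))) ^ 2) ∂Q) ^ (1/2 : ℝ)) ^ 2 := by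
  classical
  obtain ⟨C, hC0, hCN⟩ := N_le_const_mul_norm N hN_add hN_smul
  obtain ⟨c, hc, hcN⟩ := norm_le_const_mul_N N hN_add hN_smul hN_eq_zero
  have hN0 := N_nonneg N hN_add hN_smul
  have hNc := N_continuous N hN_add hN_smul
  have hφm : Measurable φ := hφC1.continuous.measurable
  set P₀ : Measure (𝒳 × (Fin d → ℝ)) := mixZeroComap κ φ (hφC1.continuous.measurable) Q
    with hP₀
  set P₁ : Measure (𝒳 × (Fin d → ℝ)) := mixShiftComap κ φ (hφC1.continuous.measurable) Q h
    with hP₁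
  set B : ℝ≥0∞ := ∫⁻ t, ENNReal.ofReal ((N (ψ (φ t) - ψ (φ (t - h)))) ^ 2) ∂Q with hBdef
  set R : ℝ≥0∞ := ⨆ θ ∈ Θ₀, ∫⁻ x, ENNReal.ofReal ((N (T x - ψ θ)) ^ 2) ∂(κ θ) with hRdef
  -- instances
  haveI : IsMarkovKernel (κ.comap φ (hφC1.continuous.measurable)) :=
    Kernel.IsMarkovKernel.comap κ _
  haveI hP₀prob : IsProbabilityMeasure P₀ := by
    rw [hP₀, mixZeroComap]
    exact Measure.isProbabilityMeasure_map measurable_swap.aemeasurable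
  set τ : 𝒳 × (Fin d → ℝ) → 𝒳 × (Fin d → ℝ) := fun z => (z.1, z.2 - h) with hτdef
  have hτ : Measurable τ := measurable_fst.prodMk (measurable_snd.sub measurable_const)
  have hP₁map : P₁ = P₀.map τ := rfl
  haveI hP₁prob : IsProbabilityMeasure P₁ := by
    rw [hP₁map]; exact Measure.isProbabilityMeasure_map hτ.aemeasurable
  -- lintegral lifting lemmas
  have hlift0 : ∀ (G : 𝒳 × (Fin d → ℝ) → ℝ≥0∞), Measurable G →
      ∫⁻ z, G z ∂P₀ = ∫⁻ t, ∫⁻ x, G (x, t) ∂(κ (φ t)) ∂Q := by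
    intro G hG
    rw [hP₀, mixZeroComap, lintegral_map hG measurable_swap,
      Measure.lintegral_compProd (f := fun z : (Fin d → ℝ) × 𝒳 => G z.swap)
        (hG.comp measurable_swap)]
    refine lintegral_congr fun t => ?_
    rw [Kernel.comap_apply]
    rfl
  have hlift1 : ∀ (G : 𝒳 × (Fin d → ℝ) → ℝ≥0∞), Measurable G →
      ∫⁻ z, G z ∂P₁ = ∫⁻ z, G (z.1, z.2 - h) ∂P₀ := by
    intro G hG
    rw [hP₁map, lintegral_map hG hτ]
  -- trivial case
  by_cases hRtop : R = ⊤
  · rw [ge_iff_le, hRtop]; exact le_top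
  -- the statistic-error function
  set f : 𝒳 × (Fin d → ℝ) → (Fin k → ℝ) := fun z => T z.1 - ψ (φ z.2) with hfdef
  have hfm : Measurable f := (hT.comp measurable_fst).sub ((hψ.comp hφm).comp measurable_snd)
  have hNf2m : Measurable fun z => ENNReal.ofReal ((N (f z))^2) :=
    ENNReal.measurable_ofReal.comp ((hNc.measurable.comp hfm).pow_const 2)
  -- second moment under P₀ is at most R
  have hm0R : ∫⁻ z, ENNReal.ofReal ((N (f z))^2) ∂P₀ ≤ R := by
    rw [hlift0 _ hNf2m]
    calc ∫⁻ t, ∫⁻ x, ENNReal.ofReal ((N (f (x, t)))^2) ∂(κ (φ t)) ∂Q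
        ≤ ∫⁻ _, R ∂Q := by
          refine lintegral_mono fun t => ?_
          have hmem : φ t ∈ Θ₀ := hφrange ▸ Set.mem_range_self t
          exact le_biSup (fun θ => ∫⁻ x, ENNReal.ofReal ((N (T x - ψ θ)) ^ 2) ∂(κ θ)) hmem
      _ = R := by rw [lintegral_const, measure_univ, mul_one]
  have hm0ne : ∫⁻ z, ENNReal.ofReal ((N (f z))^2) ∂P₀ ≠ ⊤ :=
    (hm0R.trans_lt (lt_top_iff_ne_top.2 hRtop)).ne
  -- the (shifted) bias term under P₀ equals B
  have hGm : Measurable fun t : Fin d → ℝ => ψ (φ t) - ψ (φ (t - h)) :=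
    (hψ.comp hφm).sub ((hψ.comp hφm).comp (measurable_id.sub measurable_const))
  have hBP0 : ∫⁻ z : 𝒳 × (Fin d → ℝ),
      ENNReal.ofReal ((N (ψ (φ z.2) - ψ (φ (z.2 - h))))^2) ∂P₀ = B := by
    rw [hlift0 (fun z : 𝒳 × (Fin d → ℝ) =>
        ENNReal.ofReal ((N (ψ (φ z.2) - ψ (φ (z.2 - h))))^2))
      (ENNReal.measurable_ofReal.comp
        ((hNc.measurable.comp (hGm.comp measurable_snd)).pow_const 2))]
    rw [hBdef]
    refine lintegral_congr fun t => ?_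
    show (∫⁻ _, ENNReal.ofReal ((N (ψ (φ t) - ψ (φ (t - h))))^2) ∂(κ (φ t))) = _
    rw [lintegral_const, measure_univ, mul_one]
  -- Minkowski: second moment under P₁
  have hsq_eq : ∀ (s : ℝ), 0 ≤ s → ENNReal.ofReal (s^2) = ENNReal.ofReal s ^ (2:ℝ) := by
    intro s hs
    rw [ENNReal.ofReal_rpow_of_nonneg hs (by norm_num)]
    norm_num
  set a : 𝒳 × (Fin d → ℝ) → ℝ≥0∞ := fun z => ENNReal.ofReal (N (f z)) with hadef
  set b : 𝒳 × (Fin d → ℝ) → ℝ≥0∞ :=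
    fun z => ENNReal.ofReal (N (ψ (φ z.2) - ψ (φ (z.2 - h)))) with hbdef
  have ham : Measurable a := ENNReal.measurable_ofReal.comp (hNc.measurable.comp hfm)
  have hbm : Measurable b := ENNReal.measurable_ofReal.comp
    ((hNc.measurable.comp hGm).comp measurable_snd)
  have h_m1_eq : ∫⁻ z, ENNReal.ofReal ((N (f z))^2) ∂P₁ =
      ∫⁻ z : 𝒳 × (Fin d → ℝ), ENNReal.ofReal ((N (T z.1 - ψ (φ (z.2 - h))))^2) ∂P₀ :=
    hlift1 _ hNf2m
  have hptw : ∀ z : 𝒳 × (Fin d → ℝ),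
      ENNReal.ofReal (N (T z.1 - ψ (φ (z.2 - h)))) ≤ a z + b z := by
    intro z
    have htri : N (T z.1 - ψ (φ (z.2 - h))) ≤
        N (f z) + N (ψ (φ z.2) - ψ (φ (z.2 - h))) := by
      have := hN_add (T z.1 - ψ (φ z.2)) (ψ (φ z.2) - ψ (φ (z.2 - h)))
      simpa using this
    calc ENNReal.ofReal (N (T z.1 - ψ (φ (z.2 - h))))
        ≤ ENNReal.ofReal (N (f z) + N (ψ (φ z.2) - ψ (φ (z.2 - h)))) :=
          ENNReal.ofReal_le_ofReal htri
      _ = a z + b z := ENNReal.ofReal_add (hN0 _) (hN0 _)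
  have hmink : (∫⁻ z, ENNReal.ofReal ((N (f z))^2) ∂P₁) ^ (1/2:ℝ) ≤
      (∫⁻ z, ENNReal.ofReal ((N (f z))^2) ∂P₀) ^ (1/2:ℝ) + B ^ (1/2:ℝ) := by
    rw [h_m1_eq]
    calc (∫⁻ z : 𝒳 × (Fin d → ℝ),
          ENNReal.ofReal ((N (T z.1 - ψ (φ (z.2 - h))))^2) ∂P₀) ^ (1/2:ℝ)
        ≤ (∫⁻ z, ((a + b) z)^(2:ℝ) ∂P₀) ^ (1/2:ℝ) := by
          refine ENNReal.rpow_le_rpow ?_ (by norm_num)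
          refine lintegral_mono fun z => ?_
          rw [hsq_eq _ (hN0 _)]
          exact ENNReal.rpow_le_rpow (hptw z) (by norm_num)
      _ ≤ (∫⁻ z, (a z)^(2:ℝ) ∂P₀) ^ (1/2:ℝ) + (∫⁻ z, (b z)^(2:ℝ) ∂P₀) ^ (1/2:ℝ) :=
          ENNReal.lintegral_Lp_add_le ham.aemeasurable hbm.aemeasurable (by norm_num)
      _ = (∫⁻ z, ENNReal.ofReal ((N (f z))^2) ∂P₀) ^ (1/2:ℝ) + B ^ (1/2:ℝ) := by
          congr 1
          · congr 1
            exact lintegral_congr fun z => (hsq_eq _ (hN0 _)).symm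
          · rw [← hBP0]
            congr 1
            exact lintegral_congr fun z => (hsq_eq _ (hN0 _)).symm
  have hm1le : ∫⁻ z, ENNReal.ofReal ((N (f z))^2) ∂P₁ ≤
      ((∫⁻ z, ENNReal.ofReal ((N (f z))^2) ∂P₀) ^ (1/2:ℝ) + B ^ (1/2:ℝ)) ^ (2:ℝ) := by
    have h2 := ENNReal.rpow_le_rpow hmink (by norm_num : (0:ℝ) ≤ 2)
    rwa [← ENNReal.rpow_mul, show (1/2 : ℝ) * 2 = 1 by norm_num, ENNReal.rpow_one] at h2
  have hm1ne : ∫⁻ z, ENNReal.ofReal ((N (f z))^2) ∂P₁ ≠ ⊤ := by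
    refine (hm1le.trans_lt ?_).ne
    apply ENNReal.rpow_lt_top_of_nonneg (by norm_num)
    apply ENNReal.add_ne_top.2
    constructor
    · exact ENNReal.rpow_ne_top_of_nonneg (by norm_num) hm0ne
    · exact ENNReal.rpow_ne_top_of_nonneg (by norm_num) hB
  -- integrability
  have hint0 : Integrable f P₀ :=
    integrable_of_sq_lintegral_ne_top hc hN0 hcN hNc P₀ hfm hm0ne
  have hint1 : Integrable f P₁ :=
    integrable_of_sq_lintegral_ne_top hc hN0 hcN hNc P₁ hfm hm1ne
  -- the bias identity
  have hΔ : (∫ z, f z ∂P₁) - ∫ z, f z ∂P₀ = ∫ t, (ψ (φ t) - ψ (φ (t - h))) ∂Q := by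
    have h1 : ∫ z, f z ∂P₁ = ∫ z, f (τ z) ∂P₀ := by
      rw [hP₁map]
      exact integral_map hτ.aemeasurable hfm.aestronglyMeasurable
    have hint1' : Integrable (fun z => f (τ z)) P₀ := by
      have h5 : Integrable f (P₀.map τ) := by rw [← hP₁map]; exact hint1
      exact (integrable_map_measure hfm.aestronglyMeasurable hτ.aemeasurable).mp h5
    rw [h1, ← integral_sub hint1' hint0]
    have h2 : (fun z => f (τ z) - f z) =
        fun z : 𝒳 × (Fin d → ℝ) => ψ (φ z.2) - ψ (φ (z.2 - h)) := by
      funext z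
      show (T z.1 - ψ (φ (z.2 - h))) - (T z.1 - ψ (φ z.2)) = _
      abel
    rw [h2]
    have hmap : P₀.map Prod.snd = Q := by
      rw [hP₀, mixZeroComap, Measure.map_map measurable_snd measurable_swap]
      have hss : (Prod.snd ∘ Prod.swap : (Fin d → ℝ) × 𝒳 → (Fin d → ℝ)) = Prod.fst := rfl
      rw [hss]
      exact Measure.fst_compProd Q _
    calc ∫ z : 𝒳 × (Fin d → ℝ), (ψ (φ z.2) - ψ (φ (z.2 - h))) ∂P₀
        = ∫ t, (ψ (φ t) - ψ (φ (t - h))) ∂(P₀.map Prod.snd) :=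
          (integral_map measurable_snd.aemeasurable hGm.aestronglyMeasurable).symm
      _ = ∫ t, (ψ (φ t) - ψ (φ (t - h))) ∂Q := by rw [hmap]
  -- apply the key Hellinger bound
  have hkey := key_hellinger_bound N hN_add hN_smul hN0 hNc hCN
    (fun μ hfin hne g hg => by
      haveI := hfin; haveI := hne
      exact N_integral_le_integral_N N hN_add hN_smul hN0 hNc hCN μ g hg)
    P₀ P₁ f hfm hint0 hint1 hm0ne hm1ne
  rw [hΔ] at hkey
  -- final arithmetic
  set Rr : ℝ := R.toReal with hRr
  set Br : ℝ := B.toReal with hBr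
  set M0 : ℝ := (∫⁻ z, ENNReal.ofReal ((N (f z))^2) ∂P₀).toReal with hM0def
  set M1 : ℝ := (∫⁻ z, ENNReal.ofReal ((N (f z))^2) ∂P₁).toReal with hM1def
  have hRrnn : 0 ≤ Rr := ENNReal.toReal_nonneg
  have hBrnn : 0 ≤ Br := ENNReal.toReal_nonneg
  have hM0R : M0 ≤ Rr := ENNReal.toReal_mono hRtop hm0R
  have hM0nn : 0 ≤ M0 := ENNReal.toReal_nonneg
  have hM1nn : 0 ≤ M1 := ENNReal.toReal_nonneg
  have hM1le : M1 ≤ (Real.sqrt Rr + Real.sqrt Br)^2 := by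
    have hfin : ((∫⁻ z, ENNReal.ofReal ((N (f z))^2) ∂P₀) ^ (1/2:ℝ) + B ^ (1/2:ℝ)) ^ (2:ℝ)
        ≠ ⊤ := by
      apply ENNReal.rpow_ne_top_of_nonneg (by norm_num)
      exact ENNReal.add_ne_top.2 ⟨ENNReal.rpow_ne_top_of_nonneg (by norm_num) hm0ne,
        ENNReal.rpow_ne_top_of_nonneg (by norm_num) hB⟩
    have h3 : M1 ≤ (((∫⁻ z, ENNReal.ofReal ((N (f z))^2) ∂P₀) ^ (1/2:ℝ) +
        B ^ (1/2:ℝ)) ^ (2:ℝ)).toReal := ENNReal.toReal_mono hfin hm1le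
    have h4 : (((∫⁻ z, ENNReal.ofReal ((N (f z))^2) ∂P₀) ^ (1/2:ℝ) +
        B ^ (1/2:ℝ)) ^ (2:ℝ)).toReal = (Real.sqrt M0 + Real.sqrt Br)^2 := by
      rw [← ENNReal.toReal_rpow, ENNReal.toReal_add
        (ENNReal.rpow_ne_top_of_nonneg (by norm_num) hm0ne)
        (ENNReal.rpow_ne_top_of_nonneg (by norm_num) hB),
        ← ENNReal.toReal_rpow, ← ENNReal.toReal_rpow, ← hM0def, ← hBr,
        ← Real.sqrt_eq_rpow, ← Real.sqrt_eq_rpow]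
      rw [show ((2:ℝ) : ℝ) = ((2:ℕ) : ℝ) by norm_num, Real.rpow_natCast]
    rw [h4] at h3
    refine h3.trans ?_
    have hs : Real.sqrt M0 ≤ Real.sqrt Rr := Real.sqrt_le_sqrt hM0R
    have h5 : Real.sqrt M0 + Real.sqrt Br ≤ Real.sqrt Rr + Real.sqrt Br := by linarith
    exact pow_le_pow_left₀ (by positivity) h5 2
  -- combine
  set S : ℝ := Real.sqrt Rr + Real.sqrt Br with hSdef
  have hSnn : 0 ≤ S := by positivity
  have hRrS : Rr ≤ S^2 := by
    have := Real.sq_sqrt hRrnn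
    nlinarith [Real.sqrt_nonneg Rr, Real.sqrt_nonneg Br]
  have hsum : 2 * (M0 + M1) ≤ (2*S)^2 := by nlinarith
  have hkey2 : N (∫ t, (ψ (φ t) - ψ (φ (t - h))) ∂Q) ≤
      Real.sqrt (hellingerSq P₀ P₁) * (2*S) := by
    refine hkey.trans ?_
    refine mul_le_mul_of_nonneg_left ?_ (Real.sqrt_nonneg _)
    calc Real.sqrt (2 * (M0 + M1)) ≤ Real.sqrt ((2*S)^2) := Real.sqrt_le_sqrt hsum
      _ = 2*S := Real.sqrt_sq (by positivity)
  have hHpos : 0 < Real.sqrt (hellingerSq P₀ P₁) := Real.sqrt_pos.2 hH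
  set cc : ℝ := N (∫ t, (ψ (φ t) - ψ (φ (t - h))) ∂Q) /
    (2 * Real.sqrt (hellingerSq P₀ P₁)) with hccdef
  have hccle : cc ≤ S := by
    rw [hccdef, div_le_iff₀ (by positivity)]
    calc N (∫ t, (ψ (φ t) - ψ (φ (t - h))) ∂Q)
        ≤ Real.sqrt (hellingerSq P₀ P₁) * (2*S) := hkey2
      _ = S * (2 * Real.sqrt (hellingerSq P₀ P₁)) := by ring
  -- final ENNReal manipulation
  have hBhalf : B ^ (1/2:ℝ) = ENNReal.ofReal (Real.sqrt Br) := by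
    conv_lhs => rw [← ENNReal.ofReal_toReal hB]
    rw [ENNReal.ofReal_rpow_of_nonneg ENNReal.toReal_nonneg (by norm_num),
      ← Real.sqrt_eq_rpow]
  rw [ge_iff_le, hBhalf, ← ENNReal.ofReal_sub _ (Real.sqrt_nonneg _)]
  rcases le_or_gt (cc - Real.sqrt Br) 0 with hneg | hpos
  · rw [ENNReal.ofReal_eq_zero.2 hneg]
    simpa using zero_le R
  · have h1 : cc - Real.sqrt Br ≤ Real.sqrt Rr := by
      rw [hSdef] at hccle; linarith
    have h2 : (cc - Real.sqrt Br)^2 ≤ Rr := by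
      have := pow_le_pow_left₀ hpos.le h1 2
      rwa [Real.sq_sqrt hRrnn] at this
    calc (ENNReal.ofReal (cc - Real.sqrt Br))^2
        = ENNReal.ofReal ((cc - Real.sqrt Br)^2) := (ENNReal.ofReal_pow hpos.le 2).symm
      _ ≤ ENNReal.ofReal Rr := ENNReal.ofReal_le_ofReal h2
      _ = R := ENNReal.ofReal_toReal hRtop
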